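/- Let z = x + iy with y > 0 and suppose sup_{n≥0} ‖D_n‖ < ∞. Let F = (F_n)_{n≥0} be a matrix solution of the eigenvalue equation at z with F_0 = I and Σ_{n≥0} ‖F_n‖_F² < ∞, and set M := −F_1 D_0^{-1}. Then Σ_{k=1}^{∞} ‖F_k‖_F² ≤ ‖D_0²‖_F · ‖M‖_F / y. -/

import Mathlib

open Matrix

noncomputable section

/-- The complexification of a real matrix. -/
def cmat {l : ℕ} (A : Matrix (Fin l) (Fin l) ℝ) : Matrix (Fin l) (Fin l) ℂ :=
  A.map (Complex.ofReal)

/-- The operator norm of a real `l×l` matrix. -/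
def opNorm {l : ℕ} (A : Matrix (Fin l) (Fin l) ℝ) : ℝ :=
  ‖Matrix.toEuclideanCLM (𝕜 := ℝ) (n := Fin l) A‖

/-- The Frobenius norm of a complex `l×l` matrix: `‖A‖_F = sqrt(tr(A*A))`. -/
def frob {l : ℕ} (A : Matrix (Fin l) (Fin l) ℂ) : ℝ :=
  Real.sqrt ((Aᴴ * A).trace.re)

/-- `U` is a matrix solution of the eigenvalue equation at `w`. -/
def IsMatSol {l : ℕ} (D V : ℕ → Matrix (Fin l) (Fin l) ℝ) (w : ℂ)
    (U : ℕ → Matrix (Fin l) (Fin l) ℂ) : Prop :=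
  ∀ n : ℕ, 1 ≤ n →
    cmat (D n) * U (n + 1) + cmat (D (n - 1)) * U (n - 1) + cmat (V n) * U n = w • U n

/-!
This is Green's identity for the three-term recurrence. Multiply the equation at `n + 1` on the
left by `F_{n+1}ᴴ` and take the imaginary part of the trace: since `D` and `V` are symmetric, the
imaginary part of the flux `tr(F_nᴴ D_n F_{n+1})` grows by exactly `y ‖F_{n+1}‖_F²` per step.
Square-summability and the bound on `D_n` make the flux vanish at infinity, so
`y Σ_{k≥1} ‖F_k‖_F² = -Im tr(D_0 F_1)`. Writing `F_1 = -M D_0`, this is `Im tr(D_0² M)`, and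
Cauchy–Schwarz for the Frobenius inner product bounds it by `‖D_0²‖_F ‖M‖_F`.
-/

open Filter Topology
open scoped InnerProductSpace

section Frobenius

variable {m n 𝕜 : Type*} [Fintype m] [Fintype n] [RCLike 𝕜]

def Matrix.toEuclideanVec (A : Matrix m n 𝕜) : EuclideanSpace 𝕜 (m × n) :=
  WithLp.toLp 2 fun p => A p.1 p.2

lemma Matrix.trace_conjTranspose_mul_eq_inner (A B : Matrix m n 𝕜) :
    (Aᴴ * B).trace = ⟪A.toEuclideanVec, B.toEuclideanVec⟫_𝕜 := by
  simp only [trace, diag, mul_apply, conjTranspose_apply, toEuclideanVec, PiLp.inner_apply,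
    RCLike.inner_apply, Fintype.sum_prod_type]
  rw [Finset.sum_comm]
  simp [mul_comm]

lemma Matrix.IsHermitian.im_trace_eq_zero {A : Matrix n n ℂ} (hA : A.IsHermitian) :
    A.trace.im = 0 :=
  Complex.conj_eq_iff_im.mp (by rw [← Complex.star_def, ← trace_conjTranspose, hA.eq])

variable {l : ℕ}

lemma frob_eq_norm_toEuclideanVec (A : Matrix (Fin l) (Fin l) ℂ) :
    frob A = ‖A.toEuclideanVec‖ := by
  rw [frob, trace_conjTranspose_mul_eq_inner, ← RCLike.re_eq_complex_re, inner_self_eq_norm_sq,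
    Real.sqrt_sq (norm_nonneg _)]

lemma frob_nonneg (A : Matrix (Fin l) (Fin l) ℂ) : 0 ≤ frob A := Real.sqrt_nonneg _

lemma trace_conjTranspose_mul_self_eq_frob_sq (A : Matrix (Fin l) (Fin l) ℂ) :
    (Aᴴ * A).trace = (frob A ^ 2 : ℝ) := by
  rw [trace_conjTranspose_mul_eq_inner, inner_self_eq_norm_sq_to_K, frob_eq_norm_toEuclideanVec]
  push_cast; rfl

lemma norm_trace_conjTranspose_mul_le (A B : Matrix (Fin l) (Fin l) ℂ) :
    ‖(Aᴴ * B).trace‖ ≤ frob A * frob B := by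
  rw [trace_conjTranspose_mul_eq_inner, frob_eq_norm_toEuclideanVec, frob_eq_norm_toEuclideanVec]
  exact norm_inner_le_norm _ _

lemma frob_eq_frobenius_norm (A : Matrix (Fin l) (Fin l) ℂ) :
    frob A = @Norm.norm _ Matrix.frobeniusSeminormedAddCommGroup.toNorm A := by
  rw [frob_eq_norm_toEuclideanVec, EuclideanSpace.norm_eq, frobenius_norm_def, Real.sqrt_eq_rpow,
    Fintype.sum_prod_type]
  simp [toEuclideanVec]

lemma frob_mul_le (A B : Matrix (Fin l) (Fin l) ℂ) : frob (A * B) ≤ frob A * frob B := by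
  simp only [frob_eq_frobenius_norm]
  exact frobenius_norm_mul A B

end Frobenius

section Complexification

variable {l : ℕ}

lemma cmat_mul (A B : Matrix (Fin l) (Fin l) ℝ) : cmat (A * B) = cmat A * cmat B :=
  Matrix.map_mul (f := Complex.ofRealHom)

lemma isUnit_det_cmat {A : Matrix (Fin l) (Fin l) ℝ} (hA : IsUnit A.det) :
    IsUnit (cmat A).det := by
  rw [show (cmat A).det = (A.det : ℂ) from (RingHom.map_det Complex.ofRealHom A).symm]
  exact hA.map Complex.ofRealHom

lemma Matrix.IsSymm.isHermitian_cmat {A : Matrix (Fin l) (Fin l) ℝ} (hA : A.IsSymm) :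
    (cmat A).IsHermitian :=
  (isHermitian_iff_isSymm.mpr hA).map _ fun x => (Complex.conj_ofReal x).symm

lemma opNorm_nonneg (A : Matrix (Fin l) (Fin l) ℝ) : 0 ≤ opNorm A := norm_nonneg _

lemma sum_sq_apply_le_opNorm_sq (A : Matrix (Fin l) (Fin l) ℝ) (j : Fin l) :
    ∑ i, A i j ^ 2 ≤ opNorm A ^ 2 := by
  have hcol := (toEuclideanCLM (𝕜 := ℝ) (n := Fin l) A).le_opNorm (EuclideanSpace.single j 1)
  rw [PiLp.norm_single, norm_one, mul_one] at hcol
  calc ∑ i, A i j ^ 2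
      = ‖toEuclideanCLM (𝕜 := ℝ) (n := Fin l) A (EuclideanSpace.single j 1)‖ ^ 2 := by
        rw [EuclideanSpace.norm_sq_eq]
        simp [EuclideanSpace.single]
    _ ≤ opNorm A ^ 2 := pow_le_pow_left₀ (norm_nonneg _) hcol 2

lemma frob_cmat_le_sqrt_mul_opNorm (A : Matrix (Fin l) (Fin l) ℝ) :
    frob (cmat A) ≤ √l * opNorm A := by
  have hsq : frob (cmat A) ^ 2 ≤ l * opNorm A ^ 2 :=
    calc frob (cmat A) ^ 2 = ∑ j, ∑ i, A i j ^ 2 := by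
          rw [frob_eq_norm_toEuclideanVec, EuclideanSpace.norm_sq_eq, Fintype.sum_prod_type,
            Finset.sum_comm]
          simp [toEuclideanVec, cmat]
      _ ≤ ∑ _j : Fin l, opNorm A ^ 2 :=
          Finset.sum_le_sum fun j _ => sum_sq_apply_le_opNorm_sq A j
      _ = l * opNorm A ^ 2 := by simp
  calc frob (cmat A) = √(frob (cmat A) ^ 2) := (Real.sqrt_sq (frob_nonneg _)).symm
    _ ≤ √(l * opNorm A ^ 2) := Real.sqrt_le_sqrt hsq
    _ = √l * opNorm A := by
      rw [Real.sqrt_mul (Nat.cast_nonneg l), Real.sqrt_sq (opNorm_nonneg A)]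

end Complexification

lemma Matrix.trace_mul_eq_trace_mul_self_mul_mul_inv {n R : Type*} [Fintype n] [DecidableEq n]
    [CommRing R] {H : Matrix n n R} (hH : IsUnit H.det) (F : Matrix n n R) :
    (H * F).trace = (H * H * (F * H⁻¹)).trace := by
  rw [← Matrix.mul_assoc, trace_mul_comm (H * H * F), ← Matrix.mul_assoc, ← Matrix.mul_assoc,
    nonsing_inv_mul _ hH, Matrix.one_mul]

section Flux

variable {l : ℕ} {D V : ℕ → Matrix (Fin l) (Fin l) ℝ} {w : ℂ} {U : ℕ → Matrix (Fin l) (Fin l) ℂ}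

def flux (D : ℕ → Matrix (Fin l) (Fin l) ℝ) (U : ℕ → Matrix (Fin l) (Fin l) ℂ) (n : ℕ) : ℂ :=
  ((U n)ᴴ * (cmat (D n) * U (n + 1))).trace

lemma IsMatSol.im_flux_succ (hD : ∀ n, (D n).IsSymm) (hV : ∀ n, (V n).IsSymm)
    (hU : IsMatSol D V w U) (n : ℕ) :
    (flux D U (n + 1)).im = (flux D U n).im + w.im * frob (U (n + 1)) ^ 2 := by
  set G := U (n + 1)
  have heq : Gᴴ * (cmat (D (n + 1)) * U (n + 2)) + Gᴴ * (cmat (D n) * U n)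
      + Gᴴ * (cmat (V (n + 1)) * G) = w • (Gᴴ * G) := by
    rw [← Matrix.mul_add, ← Matrix.mul_add, ← Matrix.mul_smul]
    congr 1
    simpa using hU (n + 1) (Nat.le_add_left 1 n)
  have hback : (Gᴴ * (cmat (D n) * U n)).trace = star (flux D U n) := by
    rw [flux, ← trace_conjTranspose, conjTranspose_mul, conjTranspose_mul,
      (hD n).isHermitian_cmat.eq, conjTranspose_conjTranspose, Matrix.mul_assoc]
  have hpot : (Gᴴ * (cmat (V (n + 1)) * G)).trace.im = 0 := by
    rw [← Matrix.mul_assoc]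
    exact (isHermitian_conjTranspose_mul_mul G (hV _).isHermitian_cmat).im_trace_eq_zero
  have him := congrArg (fun A => A.trace.im) heq
  simp only [trace_add, trace_smul, Complex.add_im, hback, hpot,
    trace_conjTranspose_mul_self_eq_frob_sq, smul_eq_mul, Complex.mul_im, Complex.ofReal_im,
    Complex.ofReal_re, Complex.star_def, Complex.conj_im] at him
  change (Gᴴ * (cmat (D (n + 1)) * U (n + 2))).trace.im = _
  linarith

lemma IsMatSol.im_flux_eq_add_sum (hD : ∀ n, (D n).IsSymm) (hV : ∀ n, (V n).IsSymm)
    (hU : IsMatSol D V w U) (N : ℕ) :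
    (flux D U N).im = (flux D U 0).im + w.im * ∑ k ∈ Finset.range N, frob (U (k + 1)) ^ 2 := by
  induction N with
  | zero => simp
  | succ N ih => rw [hU.im_flux_succ hD hV, ih, Finset.sum_range_succ]; ring

lemma tendsto_flux_zero (hDbdd : ∃ C, ∀ n, opNorm (D n) ≤ C)
    (hsum : Summable fun n => frob (U n) ^ 2) : Tendsto (flux D U) atTop (𝓝 0) := by
  obtain ⟨C, hC⟩ := hDbdd
  have hfrob : Tendsto (fun n => frob (U n)) atTop (𝓝 0) := by
    simpa [Function.comp_def, Real.sqrt_sq (frob_nonneg _)] using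
      (Real.continuous_sqrt.tendsto 0).comp hsum.tendsto_atTop_zero
  have hbound (n : ℕ) : ‖flux D U n‖ ≤ frob (U n) * (√l * C * frob (U (n + 1))) :=
    calc ‖flux D U n‖ ≤ frob (U n) * frob (cmat (D n) * U (n + 1)) :=
          norm_trace_conjTranspose_mul_le _ _
      _ ≤ frob (U n) * (frob (cmat (D n)) * frob (U (n + 1))) := by
          gcongr
          · exact frob_nonneg _
          · exact frob_mul_le _ _
      _ ≤ frob (U n) * (√l * C * frob (U (n + 1))) := by
          have := frob_nonneg (U n); have := frob_nonneg (U (n + 1))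
          gcongr
          exact (frob_cmat_le_sqrt_mul_opNorm _).trans (by gcongr; exact hC n)
  refine squeeze_zero_norm hbound ?_
  simpa using hfrob.mul ((hfrob.comp (tendsto_add_atTop_nat 1)).const_mul (√l * C))

lemma IsMatSol.im_mul_tsum_frob_sq (hD : ∀ n, (D n).IsSymm) (hV : ∀ n, (V n).IsSymm)
    (hU : IsMatSol D V w U) (hDbdd : ∃ C, ∀ n, opNorm (D n) ≤ C)
    (hsum : Summable fun n => frob (U n) ^ 2) :
    w.im * ∑' k, frob (U (k + 1)) ^ 2 = -(flux D U 0).im := by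
  have hpartial : Tendsto (fun N => w.im * ∑ k ∈ Finset.range N, frob (U (k + 1)) ^ 2) atTop
      (𝓝 (w.im * ∑' k, frob (U (k + 1)) ^ 2)) :=
    ((summable_nat_add_iff 1).mpr hsum).hasSum.tendsto_sum_nat.const_mul _
  have hflux : Tendsto (fun N => w.im * ∑ k ∈ Finset.range N, frob (U (k + 1)) ^ 2) atTop
      (𝓝 (0 - (flux D U 0).im)) := by
    refine (((Complex.continuous_im.tendsto 0).comp (tendsto_flux_zero hDbdd hsum)).sub_const
      (flux D U 0).im).congr fun N => ?_
    simp [hU.im_flux_eq_add_sum hD hV N]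
  simpa using tendsto_nhds_unique hpartial hflux

lemma flux_zero_eq (hU0 : U 0 = 1) (hD0 : (D 0).IsSymm) (hdet : IsUnit (D 0).det) :
    flux D U 0 = -((cmat (D 0 * D 0))ᴴ * (-(U 1) * (cmat (D 0))⁻¹)).trace := by
  rw [flux, hU0, conjTranspose_one, Matrix.one_mul, cmat_mul, conjTranspose_mul,
    hD0.isHermitian_cmat.eq, Matrix.neg_mul, Matrix.mul_neg, trace_neg, neg_neg]
  exact trace_mul_eq_trace_mul_self_mul_mul_inv (isUnit_det_cmat hdet) _

end Flux

theorem sum_frob_sq_le_general (l : ℕ)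
    (D V : ℕ → Matrix (Fin l) (Fin l) ℝ)
    (hDsymm : ∀ n, (D n).IsSymm) (hVsymm : ∀ n, (V n).IsSymm)
    (hDinv : ∀ n, IsUnit (D n).det)
    (hDbdd : ∃ C : ℝ, ∀ n, opNorm (D n) ≤ C)
    (x y : ℝ) (hy : 0 < y)
    (F : ℕ → Matrix (Fin l) (Fin l) ℂ)
    (hF : IsMatSol D V ((x : ℂ) + (y : ℂ) * Complex.I) F) (hF0 : F 0 = 1)
    (hFl2 : Summable (fun n : ℕ => frob (F n) ^ 2)) :
    ∑' k : ℕ, frob (F (k + 1)) ^ 2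
      ≤ frob (cmat (D 0 * D 0)) * frob (-(F 1) * (cmat (D 0))⁻¹) / y := by
  have hkey := hF.im_mul_tsum_frob_sq hDsymm hVsymm hDbdd hFl2
  rw [flux_zero_eq hF0 (hDsymm 0) (hDinv 0), Complex.neg_im, neg_neg,
    show ((x : ℂ) + y * Complex.I).im = y by simp] at hkey
  rw [le_div_iff₀ hy, mul_comm, hkey]
  exact (Complex.im_le_norm _).trans (norm_trace_conjTranspose_mul_le _ _)

/-- Upper bound `Σ_{k≥1} ‖F_k‖_F² ≤ ‖D_0²‖_F ‖M‖_F / y` for a square-summable matrix solution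
`F` at `z = x + iy`, `y > 0`, with `F_0 = I` and `M := −F_1 D_0^{-1}`. -/
theorem sum_frob_sq_le (l : ℕ) (hl : 1 ≤ l)
    (D V : ℕ → Matrix (Fin l) (Fin l) ℝ)
    (hDsymm : ∀ n, (D n).IsSymm) (hVsymm : ∀ n, (V n).IsSymm)
    (hDinv : ∀ n, IsUnit (D n).det)
    (hDbdd : ∃ C : ℝ, ∀ n, opNorm (D n) ≤ C)
    (x y : ℝ) (hy : 0 < y)
    (F : ℕ → Matrix (Fin l) (Fin l) ℂ)
    (hF : IsMatSol D V ((x : ℂ) + (y : ℂ) * Complex.I) F) (hF0 : F 0 = 1)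
    (hFl2 : Summable (fun n : ℕ => frob (F n) ^ 2)) :
    ∑' k : ℕ, frob (F (k + 1)) ^ 2
      ≤ frob (cmat (D 0 * D 0)) * frob (-(F 1) * (cmat (D 0))⁻¹) / y :=
  sum_frob_sq_le_general l D V hDsymm hVsymm hDinv hDbdd x y hy F hF hF0 hFl2
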